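/- Let $\alpha > 2$ and $m_\alpha > m_1^\alpha > 0$. For all $q > m_1(\alpha-1)\alpha^{(2-\alpha)/(\alpha-1)}$, $\sup_{F \in \mathcal{F}_{1,\alpha}} \mathbb{E}_F[\max(\tilde d - q, 0)] \leq \frac{(m_\alpha - m_1^\alpha)(\alpha-1)^{\alpha-1}}{\alpha^\alpha q^{\alpha-1} - \alpha^2 m_1^{\alpha-1}(\alpha-1)^{\alpha-1}}$. -/

import Mathlib

open MeasureTheory Real Set

/-!
Weak duality. Let `g` be the gap between `x ^ α` and its tangent line at `m₁`, so that
`∫ g dμ = m_α - m₁ ^ α` for every feasible `μ`, and let `D` be the denominator of the bound.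
Integrating `max (x - q) 0 ≤ (α - 1) ^ (α - 1) / D * g x` over `[0, ∞)` gives the bound.

With `A = α q / (α - 1)`, the hypothesis on `q` is `α m₁ ^ (α - 1) < A ^ (α - 1)`, i.e. `0 < D`.
Bounding `x ^ α` below by its tangent at `t = (A ^ (α - 1) - (α - 1) m₁ ^ (α - 1)) ^ (1 / (α - 1))`
reduces `x - q ≤ (α - 1) ^ (α - 1) / D * g x` to an inequality in `u = A ^ (α - 1)` alone. It is
an equality at `u = α m₁ ^ (α - 1)`, and the difference of its two sides is monotone in `u`
because `u ^ (1 / (α - 1))` is concave, which is where `α ≥ 2` is needed.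
-/

/-- The set of achievable expected overages over the ambiguity set `𝓕_{1,α}`. -/
noncomputable def overageSet (α m1 mα q : ℝ) : Set ℝ :=
  {E : ℝ | ∃ μ : Measure ℝ, IsProbabilityMeasure μ ∧ μ (Set.Iio 0) = 0 ∧
    Integrable (fun x => x) μ ∧ Integrable (fun x => x ^ α) μ ∧
    (∫ x, x ∂μ) = m1 ∧ (∫ x, x ^ α ∂μ) = mα ∧
    E = ∫ x, max (x - q) 0 ∂μ}

lemma rpow_tangent_le {p a x : ℝ} (hp : 1 ≤ p) (ha : 0 < a) (hx : 0 ≤ x) :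
    a ^ p + p * a ^ (p - 1) * (x - a) ≤ x ^ p := by
  have hs : -1 ≤ x / a - 1 := by linarith [div_nonneg hx ha.le]
  have hbern := mul_le_mul_of_nonneg_left (one_add_mul_self_le_rpow_one_add hs hp)
    (rpow_nonneg ha.le p)
  rw [add_sub_cancel, div_rpow hx ha.le, mul_div_cancel₀ _ (rpow_pos_of_pos ha p).ne'] at hbern
  refine le_of_eq_of_le ?_ hbern
  rw [rpow_sub_one ha.ne']
  field_simp

lemma rpow_le_tangent {p a x : ℝ} (hp₀ : 0 ≤ p) (hp₁ : p ≤ 1) (ha : 0 < a) (hx : 0 ≤ x) :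
    x ^ p ≤ a ^ p + p * a ^ (p - 1) * (x - a) := by
  have hs : -1 ≤ x / a - 1 := by linarith [div_nonneg hx ha.le]
  have hbern := mul_le_mul_of_nonneg_left (rpow_one_add_le_one_add_mul_self hs hp₀ hp₁)
    (rpow_nonneg ha.le p)
  rw [add_sub_cancel, div_rpow hx ha.le, mul_div_cancel₀ _ (rpow_pos_of_pos ha p).ne'] at hbern
  refine hbern.trans_eq ?_
  rw [rpow_sub_one ha.ne']
  field_simp

lemma rpow_rpow_one_add_inv {x β : ℝ} (hx : 0 ≤ x) (hβ : β ≠ 0) :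
    (x ^ β) ^ (1 + β⁻¹) = x ^ (β + 1) := by
  rw [← rpow_mul hx, mul_add, mul_one, mul_inv_cancel₀ hβ]

lemma rpow_of_neg {x : ℝ} (hx : x < 0) (y : ℝ) : x ^ y = (-x) ^ y * cos (y * π) := by
  rw [rpow_def_of_neg hx, rpow_def_of_pos (neg_pos.2 hx), log_neg_eq_log]

lemma rpow_sub_one_of_neg {x : ℝ} (hx : x < 0) (y : ℝ) :
    x ^ (y - 1) = -((-x) ^ (y - 1) * cos (y * π)) := by
  rw [rpow_of_neg hx, sub_mul, one_mul, cos_sub_pi, mul_neg]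

lemma monotoneOn_rpow_one_add_inv_sub {β b : ℝ} (hβ : 1 ≤ β) (hb : 0 < b) :
    MonotoneOn (fun u => u ^ (1 + β⁻¹) - (u - β * b) ^ (1 + β⁻¹) - (β + 1) * b * u ^ β⁻¹)
      (Ici ((β + 1) * b)) := by
  have hβ₀ : 0 < β := by linarith
  have hpos : ∀ u ∈ Ici ((β + 1) * b), 0 < u - β * b ∧ 0 < u := fun u (hu : _ ≤ u) =>
    ⟨by linarith, by nlinarith⟩
  have hderiv : ∀ u ∈ Ici ((β + 1) * b), HasDerivAt
      (fun u => u ^ (1 + β⁻¹) - (u - β * b) ^ (1 + β⁻¹) - (β + 1) * b * u ^ β⁻¹)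
      ((1 + β⁻¹) * (u ^ β⁻¹ - (u - β * b) ^ β⁻¹ - b * u ^ (β⁻¹ - 1))) u := by
    intro u hu
    obtain ⟨hub, hu₀⟩ := hpos u hu
    have h := ((hasDerivAt_rpow_const (p := 1 + β⁻¹) (Or.inl hu₀.ne')).sub
      ((hasDerivAt_rpow_const (p := 1 + β⁻¹) (Or.inl hub.ne')).comp u
        ((hasDerivAt_id u).sub_const (β * b)))).sub
      ((hasDerivAt_rpow_const (p := β⁻¹) (Or.inl hu₀.ne')).const_mul ((β + 1) * b))
    refine h.congr_deriv ?_
    simp only [add_sub_cancel_left]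
    field_simp
  refine monotoneOn_of_hasDerivWithinAt_nonneg (convex_Ici _)
    (fun u hu => (hderiv u hu).continuousAt.continuousWithinAt)
    (fun u hu => (hderiv u (interior_subset hu)).hasDerivWithinAt) fun u hu => ?_
  obtain ⟨hub, hu₀⟩ := hpos u (interior_subset hu)
  have hconcave := rpow_le_tangent (inv_nonneg.2 hβ₀.le) (inv_le_one_of_one_le₀ hβ) hu₀ hub.le
  have hlin : β⁻¹ * u ^ (β⁻¹ - 1) * (u - β * b - u) = -(b * u ^ (β⁻¹ - 1)) := by
    field_simp; ring
  rw [hlin] at hconcave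
  exact mul_nonneg (by positivity) (by linarith)

lemma sub_rpow_one_add_inv_le {β b u : ℝ} (hβ : 1 ≤ β) (hb : 0 < b) (hu : (β + 1) * b ≤ u) :
    (u - β * b) ^ (1 + β⁻¹) + (β + 1) * b * u ^ β⁻¹ ≤ u ^ (1 + β⁻¹) + b ^ (1 + β⁻¹) := by
  have h := monotoneOn_rpow_one_add_inv_sub hβ hb self_mem_Ici hu hu
  have hu₀ : 0 < (β + 1) * b := by positivity
  simp only [show (β + 1) * b - β * b = b by ring, rpow_add hu₀, rpow_one] at h
  linarith

noncomputable def tangentGap (α m x : ℝ) : ℝ := x ^ α - (m ^ α + α * m ^ (α - 1) * (x - m))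

lemma tangentGap_nonneg {α m x : ℝ} (hα : 1 ≤ α) (hm : 0 < m) (hx : 0 ≤ x) :
    0 ≤ tangentGap α m x :=
  sub_nonneg.2 (rpow_tangent_le hα hm hx)

lemma mul_sub_le_tangentGap {β m A x : ℝ} (hβ : 1 ≤ β) (hm : 0 < m) (hA₀ : 0 ≤ A)
    (hA : (β + 1) * m ^ β ≤ A ^ β) (hx : 0 ≤ x) :
    (β + 1) * (A ^ β - (β + 1) * m ^ β) * (x - β * A / (β + 1)) ≤ tangentGap (β + 1) m x := by
  have hβ₀ : 0 < β := by linarith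
  have hgap := sub_rpow_one_add_inv_le hβ (rpow_pos_of_pos hm β) hA
  rw [rpow_rpow_one_add_inv hA₀ hβ₀.ne', rpow_rpow_one_add_inv hm.le hβ₀.ne',
    rpow_rpow_inv hA₀ hβ₀.ne'] at hgap
  have ht₀ : 0 < A ^ β - β * m ^ β := by linarith [rpow_pos_of_pos hm β]
  set t := (A ^ β - β * m ^ β) ^ β⁻¹
  have ht_pos : 0 < t := rpow_pos_of_pos ht₀ _
  have htβ : t ^ β = A ^ β - β * m ^ β := rpow_inv_rpow ht₀.le hβ₀.ne'
  have htα : t ^ (β + 1) = (A ^ β - β * m ^ β) ^ (1 + β⁻¹) := by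
    rw [← rpow_mul ht₀.le]; congr 1; field_simp
  have htangent := rpow_tangent_le (by linarith : 1 ≤ β + 1) ht_pos hx
  rw [add_sub_cancel_right, htβ, rpow_add_one ht_pos.ne', htβ] at htangent
  rw [← htα, rpow_add_one ht_pos.ne', htβ, rpow_add_one' hA₀ (by linarith),
    rpow_add_one hm.ne'] at hgap
  have hslope : (β + 1) * (A ^ β - (β + 1) * m ^ β) * (x - β * A / (β + 1))
      = (A ^ β - (β + 1) * m ^ β) * ((β + 1) * x - β * A) := by
    field_simp
  rw [tangentGap, add_sub_cancel_right, rpow_add_one hm.ne', hslope]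
  linear_combination htangent + β * hgap

lemma max_sub_le_mul_tangentGap {α m q x : ℝ} (hα : 2 ≤ α) (hm : 0 < m) (hq : 0 ≤ q)
    (hD : 0 < α ^ α * q ^ (α - 1) - α ^ 2 * m ^ (α - 1) * (α - 1) ^ (α - 1)) (hx : 0 ≤ x) :
    max (x - q) 0 ≤ (α - 1) ^ (α - 1) /
      (α ^ α * q ^ (α - 1) - α ^ 2 * m ^ (α - 1) * (α - 1) ^ (α - 1)) * tangentGap α m x := by
  obtain ⟨β, rfl⟩ : ∃ β, α = β + 1 := ⟨α - 1, by ring⟩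
  rw [add_sub_cancel_right] at hD ⊢
  have hβ : 1 ≤ β := by linarith
  have hβ₀ : 0 < β := by linarith
  set A := (β + 1) * q / β with hA
  have hDA : (β + 1) ^ (β + 1) * q ^ β - (β + 1) ^ 2 * m ^ β * β ^ β
      = β ^ β * ((β + 1) * (A ^ β - (β + 1) * m ^ β)) := by
    rw [hA, div_rpow (by positivity) hβ₀.le, mul_rpow (by positivity) hq,
      rpow_add_one (by positivity)]
    field_simp
  rw [hDA] at hD ⊢
  have hs := pos_of_mul_pos_right hD (rpow_nonneg hβ₀.le β)
  have hslope := mul_sub_le_tangentGap (A := A) hβ hm (by positivity) (by nlinarith) hx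
  rw [show β * A / (β + 1) = q by rw [hA]; field_simp] at hslope
  rw [div_mul_cancel_left₀ (rpow_pos_of_pos hβ₀ β).ne', inv_mul_eq_div]
  exact max_le ((le_div_iff₀ hs).2 (by linarith))
    (div_nonneg (tangentGap_nonneg (by linarith) hm hx) hs.le)

lemma rpow_mul_rpow_threshold {α m : ℝ} (hα : 1 < α) (hm : 0 ≤ m) :
    α ^ α * (m * (α - 1) * α ^ ((2 - α) / (α - 1))) ^ (α - 1)
      = α ^ 2 * m ^ (α - 1) * (α - 1) ^ (α - 1) := by
  have hα₀ : 0 < α := by linarith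
  have hβ : 0 < α - 1 := by linarith
  rw [mul_rpow (by positivity) (by positivity), mul_rpow hm hβ.le, ← rpow_mul hα₀.le,
    div_mul_cancel₀ _ hβ.ne', ← rpow_two, ← add_sub_cancel α 2, rpow_add hα₀, add_sub_cancel]
  ring

/- `m` may be negative: then `overageSet` is empty, its `sSup` is `0`, and the bound must still be
nonnegative. At a negative base `Real.rpow` is `(-m) ^ y * cos (y * π)`. -/
lemma bound_denominator_pos {α m q : ℝ} (hα : 1 < α) (hm : 0 < m ^ α)
    (hq : m * (α - 1) * α ^ ((2 - α) / (α - 1)) < q) :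
    0 < α ^ α * q ^ (α - 1) - α ^ 2 * m ^ (α - 1) * (α - 1) ^ (α - 1) := by
  have hα₀ : 0 < α := by linarith
  have hβ : 0 < α - 1 := by linarith
  have hαα : 0 < α ^ α := rpow_pos_of_pos hα₀ α
  rcases lt_trichotomy m 0 with hneg | rfl | hpos
  · have hcos : 0 < cos (α * π) := by
      rw [rpow_of_neg hneg] at hm
      exact pos_of_mul_pos_right hm (rpow_nonneg (neg_nonneg.2 hneg.le) α)
    have hm' : 0 < α ^ 2 * (-m) ^ (α - 1) * (α - 1) ^ (α - 1) := by
      have := rpow_pos_of_pos (neg_pos.2 hneg) (α - 1)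
      positivity
    rw [rpow_sub_one_of_neg hneg]
    rcases le_or_gt 0 q with hq₀ | hq₀
    · nlinarith [mul_nonneg hαα.le (rpow_nonneg hq₀ (α - 1)), mul_pos hm' hcos]
    · have hlt : (-q) ^ (α - 1) < (-m * (α - 1) * α ^ ((2 - α) / (α - 1))) ^ (α - 1) :=
        rpow_lt_rpow (neg_nonneg.2 hq₀.le) (by linarith) hβ
      have hlt' := mul_lt_mul_of_pos_left hlt hαα
      rw [rpow_mul_rpow_threshold hα (neg_nonneg.2 hneg.le)] at hlt'
      rw [rpow_sub_one_of_neg hq₀]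
      nlinarith [mul_lt_mul_of_pos_right hlt' hcos]
  · rw [zero_rpow hα₀.ne'] at hm
    exact absurd hm (lt_irrefl 0)
  · have hthr : 0 ≤ m * (α - 1) * α ^ ((2 - α) / (α - 1)) := by positivity
    have hlt := mul_lt_mul_of_pos_left (rpow_lt_rpow hthr hq hβ) hαα
    rw [rpow_mul_rpow_threshold hα hpos.le] at hlt
    exact sub_pos.2 hlt

section Moments

variable {μ : Measure ℝ} {α m : ℝ}

lemma integrable_tangentGap [IsFiniteMeasure μ] (h₁ : Integrable (fun x => x) μ)
    (hα : Integrable (fun x => x ^ α) μ) : Integrable (fun x => tangentGap α m x) μ :=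
  hα.sub ((integrable_const _).add ((h₁.sub (integrable_const m)).const_mul _))

lemma integral_tangentGap [IsProbabilityMeasure μ] (h₁ : Integrable (fun x => x) μ)
    (hα : Integrable (fun x => x ^ α) μ) (hmean : ∫ x, x ∂μ = m) :
    ∫ x, tangentGap α m x ∂μ = ∫ x, x ^ α ∂μ - m ^ α := by
  have hshift : Integrable (fun x => x - m) μ := h₁.sub (integrable_const m)
  have htangent : Integrable (fun x => m ^ α + α * m ^ (α - 1) * (x - m)) μ :=
    (integrable_const _).add (hshift.const_mul _)
  simp only [tangentGap]
  rw [integral_sub hα htangent, integral_add (integrable_const _) (hshift.const_mul _),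
    integral_const_mul, integral_sub h₁ (integrable_const m), hmean]
  simp

end Moments

theorem upper_bound_large_q_alpha_gt_two
    (α m1 mα : ℝ) (hα : 2 < α) (h0 : 0 < m1 ^ α) (h1 : m1 ^ α < mα) :
    ∀ q : ℝ, m1 * (α - 1) * α ^ ((2 - α) / (α - 1)) < q →
      sSup (overageSet α m1 mα q)
        ≤ (mα - m1 ^ α) * (α - 1) ^ (α - 1)
            / (α ^ α * q ^ (α - 1) - α ^ 2 * m1 ^ (α - 1) * (α - 1) ^ (α - 1)) := by
  intro q hq
  have hβ : 0 < α - 1 := by linarith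
  have hD := bound_denominator_pos (by linarith) h0 hq
  refine Real.sSup_le ?_ (div_nonneg (mul_nonneg (by linarith) (rpow_nonneg hβ.le _)) hD.le)
  rintro _ ⟨μ, _, hsupp, hint₁, hintα, hmean, hmoment, rfl⟩
  have hae : ∀ᵐ x ∂μ, 0 ≤ x := ae_iff.2 (by simp_rw [not_le]; exact hsupp)
  have hm : 0 < m1 := by
    refine (hmean ▸ integral_nonneg_of_ae hae).lt_of_ne ?_
    rintro rfl
    simp [zero_rpow (by linarith : α ≠ 0)] at h0
  have hq₀ : 0 ≤ q := le_trans (by positivity) hq.le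
  calc ∫ x, max (x - q) 0 ∂μ
      ≤ ∫ x, (α - 1) ^ (α - 1) / (α ^ α * q ^ (α - 1) - α ^ 2 * m1 ^ (α - 1) * (α - 1) ^ (α - 1))
          * tangentGap α m1 x ∂μ :=
        integral_mono_ae (hint₁.sub (integrable_const q)).pos_part
          ((integrable_tangentGap hint₁ hintα).const_mul _)
          (hae.mono fun x hx => max_sub_le_mul_tangentGap hα.le hm hq₀ hD hx)
    _ = _ := by
        rw [integral_const_mul, integral_tangentGap hint₁ hintα hmean, hmoment]
        ring
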